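/- arXiv:1806.08459 — 3 statements merged into one kernel-verified Lean document; each statement's English description precedes it below -/
import Mathlib

section
/- Let d ∈ ℕ, B, K > 0, Ω := [-B,B]^d, and let σ be a Borel probability measure on Ω × [-K,K] with marginal σ_Ω on Ω. Let S = (d, N_1, ..., N_{L-1}, 1) be a neural network architecture and ρ : ℝ → ℝ locally Lipschitz continuous. Let f_σ : Ω → ℝ be a measurable function (the regression function) such that for every measurable f : Ω → ℝ one has ∫ |f(x)-y|² dσ(x,y) = ∫ |f_σ(x)-y|² dσ(x,y) + ∫ |f(x)-f_σ(x)|² dσ_Ω(x). Assume there does not exist a best approximation of f_σ in RNN_ρ^Ω(S) with respect to the L²(σ_Ω) norm, i.e. no g ∈ RNN_ρ^Ω(S) attains inf_{h ∈ RNN_ρ^Ω(S)} ‖f_σ - h‖_{L²(σ_Ω)}. Let ((x_i, y_i))_{i ∈ ℕ} be i.i.d. with distribution σ, and for N ∈ ℕ and f : Ω → ℝ set E_N(f) := (1/N) Σ_{i=1}^N |f(x_i) - y_i|². If (Φ_N)_{N ∈ ℕ} is a (random) sequence of neural networks with architecture S such that for every ε > 0 the probability of the event { E_N(R_ρ^Ω(Φ_N))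 - inf_{f ∈ RNN_ρ^Ω(S)} E_N(f) > ε } tends to 0 as N → ∞, then ‖Φ_N‖_total → ∞ in probability as N → ∞. -/
/-!
On the compact ball `‖Φ‖ ≤ |C|` the risk `Φ ↦ ∫ (R Φ x - y)² dσ` is continuous, so it attains a
minimum at some `Φₛ`. By the bias-variance decomposition a global risk minimizer would be a best
`L²(σ_Ω)` approximation of `fσ`, so some network `Ψₛ` has risk smaller than every network in the
ball by a gap `3ε`. Joint continuity of the loss and compactness of the ball and of the support
of `σ` reduce a one-sided uniform law of large numbers on the ball to the strong law at finitely
many networks: with high probability every network in the ball has empirical risk above its risk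
minus `ε`, while `Ψₛ` has empirical risk below its risk plus `ε`. An `ε`-approximate empirical
risk minimizer therefore lies outside the ball with probability tending to one.
-/

open scoped BigOperators ENNReal NNReal Pointwise
open Filter MeasureTheory Topology

abbrev NNLayer (N : ℕ → ℕ) (ℓ : ℕ) : Type :=
  (Fin (N (ℓ + 1)) → Fin (N ℓ) → ℝ) × (Fin (N (ℓ + 1)) → ℝ)

abbrev NNParams (L : ℕ) (N : ℕ → ℕ) : Type :=
  (ℓ : Fin L) → NNLayer N ℓ.val

noncomputable def nnAffine {N : ℕ → ℕ} {ℓ : ℕ} (W : NNLayer N ℓ) (x : Fin (N ℓ) → ℝ) :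
    Fin (N (ℓ + 1)) → ℝ :=
  fun i => (∑ j, W.1 i j * x j) + W.2 i

noncomputable def nnHidden (ρ : ℝ → ℝ) :
    (L : ℕ) → (N : ℕ → ℕ) → NNParams L N → (Fin (N 0) → ℝ) → Fin (N L) → ℝ
  | 0, _, _, x => x
  | L + 1, N, Φ, x =>
      nnHidden ρ L (fun k => N (k + 1))
        (fun ℓ => Φ ⟨ℓ.val + 1, Nat.succ_lt_succ ℓ.isLt⟩)
        (fun i => ρ (nnAffine (Φ ⟨0, Nat.succ_pos L⟩) x i))

noncomputable def nnRealization (ρ : ℝ → ℝ) :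
    (L : ℕ) → (N : ℕ → ℕ) → NNParams L N → (Fin (N 0) → ℝ) → Fin (N L) → ℝ
  | 0, _, _, x => x
  | L + 1, N, Φ, x =>
      nnAffine (Φ ⟨L, Nat.lt_succ_self L⟩)
        (nnHidden ρ L N (fun ℓ => Φ ⟨ℓ.val, Nat.lt_succ_of_lt ℓ.isLt⟩) x)

noncomputable def nnRealizationScalar (ρ : ℝ → ℝ) (L : ℕ) (N : ℕ → ℕ) (h : N L = 1)
    (Φ : NNParams L N) (x : Fin (N 0) → ℝ) : ℝ :=
  nnRealization ρ L N Φ x ⟨0, by rw [h]; exact Nat.one_pos⟩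

noncomputable def nnScalingNorm {L : ℕ} {N : ℕ → ℕ} (Φ : NNParams L N) : ℝ :=
  ⨆ ℓ : Fin L, ‖(Φ ℓ).1‖

noncomputable def nnTotalNorm {L : ℕ} {N : ℕ → ℕ} (Φ : NNParams L N) : ℝ :=
  nnScalingNorm Φ + ⨆ ℓ : Fin L, ‖(Φ ℓ).2‖

open Function ProbabilityTheory

theorem continuous_nnAffine {N : ℕ → ℕ} {ℓ : ℕ} :
    Continuous (uncurry (nnAffine : NNLayer N ℓ → (Fin (N ℓ) → ℝ) → Fin (N (ℓ + 1)) → ℝ)) := by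
  unfold nnAffine
  fun_prop

theorem continuous_nnHidden {ρ : ℝ → ℝ} (hρ : Continuous ρ) :
    ∀ (L : ℕ) (N : ℕ → ℕ), Continuous (uncurry (nnHidden ρ L N))
  | 0, _ => continuous_snd
  | L + 1, N => by
    refine (continuous_nnHidden hρ L _).comp (.prodMk (by fun_prop) (continuous_pi fun i => ?_))
    exact hρ.comp <| (continuous_apply i).comp <|
      continuous_nnAffine.comp (.prodMk (by fun_prop) continuous_snd)

theorem continuous_nnRealization {ρ : ℝ → ℝ} (hρ : Continuous ρ) :
    ∀ (L : ℕ) (N : ℕ → ℕ), Continuous (uncurry (nnRealization ρ L N))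
  | 0, _ => continuous_snd
  | L + 1, N => continuous_nnAffine.comp <| .prodMk (by fun_prop) <|
      (continuous_nnHidden hρ L N).comp (.prodMk (by fun_prop) continuous_snd)

theorem continuous_nnRealizationScalar {ρ : ℝ → ℝ} (hρ : Continuous ρ) {L : ℕ} {N : ℕ → ℕ}
    (h : N L = 1) : Continuous (uncurry (nnRealizationScalar ρ L N h)) :=
  (continuous_apply _).comp (continuous_nnRealization hρ L N)

theorem norm_le_nnTotalNorm {L : ℕ} {N : ℕ → ℕ} (Φ : NNParams L N) : ‖Φ‖ ≤ nnTotalNorm Φ := by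
  have hA : ∀ ℓ, ‖(Φ ℓ).1‖ ≤ nnScalingNorm Φ := le_ciSup (Set.finite_range _).bddAbove
  have hb : ∀ ℓ, ‖(Φ ℓ).2‖ ≤ ⨆ ℓ, ‖(Φ ℓ).2‖ := le_ciSup (Set.finite_range _).bddAbove
  have hA₀ : 0 ≤ nnScalingNorm Φ := Real.iSup_nonneg fun _ => norm_nonneg _
  have hb₀ : 0 ≤ ⨆ ℓ, ‖(Φ ℓ).2‖ := Real.iSup_nonneg fun _ => norm_nonneg _
  refine (pi_norm_le_iff_of_nonneg (add_nonneg hA₀ hb₀)).mpr fun ℓ => ?_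
  rw [Prod.norm_def]
  exact max_le (by linarith [hA ℓ]) (by linarith [hb ℓ])

section Integrals

variable {α : Type*} [MeasurableSpace α] {μ : Measure α}

theorem Continuous.integrable_of_ae_mem_isCompact [TopologicalSpace α] [OpensMeasurableSpace α]
    [IsFiniteMeasure μ] {h : α → ℝ} (hh : Continuous h) {K : Set α} (hK : IsCompact K)
    (hμK : ∀ᵐ x ∂μ, x ∈ K) : Integrable h μ := by
  obtain ⟨M, hM⟩ := hK.exists_bound_of_continuousOn hh.continuousOn
  exact .of_bound hh.aestronglyMeasurable M (hμK.mono hM)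

theorem continuous_integral_of_ae_mem_isCompact {Θ : Type*} [TopologicalSpace Θ]
    [FirstCountableTopology Θ] [LocallyCompactSpace Θ] [TopologicalSpace α]
    [OpensMeasurableSpace α] [IsFiniteMeasure μ] {g : Θ → α → ℝ} (hg : Continuous (uncurry g))
    {K : Set α} (hK : IsCompact K) (hμK : ∀ᵐ x ∂μ, x ∈ K) :
    Continuous fun θ => ∫ x, g θ x ∂μ := by
  simpa only [Measure.restrict_eq_self_of_ae_mem hμK] using
    continuous_parametric_integral_of_continuous (μ := μ) hg hK

theorem integral_sub_integral_le_of_ae_sub_le [IsProbabilityMeasure μ] {f h : α → ℝ}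
    (hf : Integrable f μ) (hh : Integrable h μ) {a : ℝ} (hfh : ∀ᵐ x ∂μ, f x - h x ≤ a) :
    ∫ x, f x ∂μ - ∫ x, h x ∂μ ≤ a := by
  rw [← integral_sub hf hh]
  simpa using integral_mono_ae (hf.sub hh) (integrable_const a) hfh

theorem eLpNorm_two_eq_lintegral_sq_rpow (f : α → ℝ) :
    eLpNorm f 2 μ = (∫⁻ x, ENNReal.ofReal (f x ^ 2) ∂μ) ^ (1 / 2 : ℝ) := by
  rw [eLpNorm_eq_lintegral_rpow_enorm_toReal (by norm_num) (by norm_num)]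
  congr 1
  refine lintegral_congr fun x => ?_
  rw [← sq_abs, ← Real.norm_eq_abs, ENNReal.ofReal_pow (norm_nonneg _), ofReal_norm]
  norm_num

end Integrals

theorem exists_integral_sq_sub_lt_of_not_exists_best {ι α : Type*} [MeasurableSpace α]
    {σ : Measure (α × ℝ)} {fσ : α → ℝ} {f : ι → α → ℝ} (hf : ∀ i, Measurable (f i))
    (hint : ∀ i, Integrable (fun z => (f i z.1 - z.2) ^ 2) σ)
    (hreg : ∀ f : α → ℝ, Measurable f →
      (∫⁻ z, ENNReal.ofReal ((f z.1 - z.2) ^ 2) ∂σ)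
        = (∫⁻ z, ENNReal.ofReal ((fσ z.1 - z.2) ^ 2) ∂σ)
          + ∫⁻ x, ENNReal.ofReal ((f x - fσ x) ^ 2) ∂(σ.map Prod.fst))
    (hnobest : ¬ ∃ i, eLpNorm (fun x => fσ x - f i x) 2 (σ.map Prod.fst)
        = ⨅ j, eLpNorm (fun x => fσ x - f j x) 2 (σ.map Prod.fst))
    (i₀ : ι) : ∃ i, ∫ z, (f i z.1 - z.2) ^ 2 ∂σ < ∫ z, (f i₀ z.1 - z.2) ^ 2 ∂σ := by
  by_contra! hmin
  have hrisk : ∀ i, ∫⁻ z, ENNReal.ofReal ((f i z.1 - z.2) ^ 2) ∂σ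
      = ENNReal.ofReal (∫ z, (f i z.1 - z.2) ^ 2 ∂σ) := fun i =>
    (ofReal_integral_eq_lintegral_ofReal (hint i) (.of_forall fun _ => sq_nonneg _)).symm
  have hnoise : ∫⁻ z, ENNReal.ofReal ((fσ z.1 - z.2) ^ 2) ∂σ ≠ ⊤ :=
    ne_top_of_le_ne_top ENNReal.ofReal_ne_top <|
      le_self_add.trans_eq ((hreg _ (hf i₀)).symm.trans (hrisk i₀))
  refine hnobest ⟨i₀, le_antisymm (le_iInf fun i => ?_) (iInf_le _ _)⟩
  have hle := ENNReal.ofReal_le_ofReal (hmin i)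
  rw [← hrisk, ← hrisk, hreg _ (hf i), hreg _ (hf i₀), ENNReal.add_le_add_iff_left hnoise] at hle
  simp_rw [eLpNorm_two_eq_lintegral_sq_rpow, ← neg_sub (f _ _), neg_sq]
  exact ENNReal.rpow_le_rpow hle (by norm_num)

section EmpiricalMean

variable {E Ω : Type*} {X : ℕ → Ω → E}

noncomputable def empiricalMean (h : E → ℝ) (X : ℕ → Ω → E) (n : ℕ) (ω : Ω) : ℝ :=
  (1 / (n : ℝ)) * ∑ i ∈ Finset.range n, h (X i ω)

theorem empiricalMean_nonneg {h : E → ℝ} (hh : ∀ z, 0 ≤ h z) (n : ℕ) (ω : Ω) :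
    0 ≤ empiricalMean h X n ω :=
  mul_nonneg (by positivity) (Finset.sum_nonneg fun _ _ => hh _)

theorem empiricalMean_sub_empiricalMean_le {h₁ h₂ : E → ℝ} {a : ℝ} (ha : 0 ≤ a) (n : ℕ)
    {ω : Ω} (hle : ∀ i, h₁ (X i ω) - h₂ (X i ω) ≤ a) :
    empiricalMean h₁ X n ω - empiricalMean h₂ X n ω ≤ a := by
  rcases n.eq_zero_or_pos with rfl | hn
  · simpa [empiricalMean] using ha
  have hsum : ∑ i ∈ Finset.range n, (h₁ (X i ω) - h₂ (X i ω)) ≤ n * a := by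
    simpa using Finset.sum_le_card_nsmul (Finset.range n) _ a fun i _ => hle i
  rw [empiricalMean, empiricalMean, ← mul_sub, ← Finset.sum_sub_distrib, one_div,
    inv_mul_le_iff₀ (by positivity)]
  exact hsum

end EmpiricalMean

section LawOfLargeNumbers

variable {E Ω : Type*} [MeasurableSpace E] [MeasurableSpace Ω] {P : Measure Ω}
  {σ : Measure E} {X : ℕ → Ω → E}

theorem tendsto_measure_abs_empiricalMean_sub_integral_ge [IsFiniteMeasure P] {h : E → ℝ}
    (hh : Measurable h) (hint : Integrable h σ) (hX : ∀ i, Measurable (X i))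
    (hXσ : ∀ i, P.map (X i) = σ) (hindep : Pairwise fun i j => IndepFun (X i) (X j) P)
    {ε : ℝ} (hε : 0 < ε) :
    Tendsto (fun n => P {ω | ε ≤ |empiricalMean h X n ω - ∫ z, h z ∂σ|}) atTop (𝓝 0) := by
  have hident : ∀ i, IdentDistrib (h ∘ X i) (h ∘ X 0) P P := fun i =>
    (IdentDistrib.mk (hX i).aemeasurable (hX 0).aemeasurable (by rw [hXσ, hXσ])).comp hh
  rw [← hXσ 0] at hint ⊢
  have hmean : ∫ z, h z ∂(P.map (X 0)) = ∫ ω, (h ∘ X 0) ω ∂P :=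
    integral_map (hX 0).aemeasurable hint.aestronglyMeasurable
  have hslln := strong_law_ae_real (fun i => h ∘ X i) (hint.comp_measurable (hX 0))
    (fun i j hij => (hindep hij).comp hh hh) hident
  have hmeas : ∀ n : ℕ, Measurable fun ω => (∑ i ∈ Finset.range n, h (X i ω)) / n := fun n =>
    (Finset.measurable_sum _ fun i _ => hh.comp (hX i)).div_const _
  have hconv := tendstoInMeasure_iff_norm.mp
    (tendstoInMeasure_of_tendsto_ae (fun n => (hmeas n).aestronglyMeasurable) hslln) ε hε
  simpa [hmean, empiricalMean, div_eq_inv_mul] using hconv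

theorem tendsto_measure_exists_empiricalMean_lt_integral_sub [IsProbabilityMeasure P]
    {Θ : Type*} [TopologicalSpace Θ] [TopologicalSpace E] [OpensMeasurableSpace E]
    {g : Θ → E → ℝ} (hg : Continuous (uncurry g)) {K : Set E} (hK : IsCompact K)
    (hσK : ∀ᵐ z ∂σ, z ∈ K) {S : Set Θ} (hS : IsCompact S) (hX : ∀ i, Measurable (X i))
    (hXσ : ∀ i, P.map (X i) = σ) (hindep : Pairwise fun i j => IndepFun (X i) (X j) P)
    {ε : ℝ} (hε : 0 < ε) :
    Tendsto (fun n => P {ω | ∃ θ ∈ S, empiricalMean (g θ) X n ω < ∫ z, g θ z ∂σ - ε})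
      atTop (𝓝 0) := by
  have : IsProbabilityMeasure σ := hXσ 0 ▸ Measure.isProbabilityMeasure_map (hX 0).aemeasurable
  have hε3 : 0 < ε / 3 := by positivity
  have hint : ∀ θ, Integrable (g θ) σ := fun θ =>
    (hg.uncurry_left θ).integrable_of_ae_mem_isCompact hK hσK
  -- tube lemma: near each `θ ∈ S`, `g · z` stays `ε / 3`-close to `g θ z` uniformly in `z ∈ K`
  choose! U hU hUg using fun θ (hθ : θ ∈ S) =>
    hK.mem_uniformity_of_prod hg.continuousOn hθ (Metric.dist_mem_uniformity hε3)
  obtain ⟨t, htS, hSt⟩ := hS.elim_nhdsWithin_subcover U hU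
  have hXK : ∀ᵐ ω ∂P, ∀ i, X i ω ∈ K :=
    ae_all_iff.mpr fun i => ae_of_ae_map (hX i).aemeasurable (by rwa [hXσ i])
  have hsub : ∀ n, {ω | ∃ θ ∈ S, empiricalMean (g θ) X n ω < ∫ z, g θ z ∂σ - ε} ≤ᵐ[P]
      ⋃ c ∈ t, {ω | ε / 3 ≤ |empiricalMean (g c) X n ω - ∫ z, g c z ∂σ|} := by
    intro n
    filter_upwards [hXK] with ω hω ⟨θ, hθS, hθ⟩
    obtain ⟨c, hct, hθc⟩ := Set.mem_iUnion₂.mp (hSt hθS)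
    have hclose : ∀ z ∈ K, |g θ z - g c z| < ε / 3 := fun z hz => hUg c (htS c hct) θ hθc z hz
    have hemp : empiricalMean (g c) X n ω - empiricalMean (g θ) X n ω ≤ ε / 3 :=
      empiricalMean_sub_empiricalMean_le hε3.le n fun i =>
        (abs_sub_lt_iff.mp (hclose _ (hω i))).2.le
    have hrisk : ∫ z, g θ z ∂σ - ∫ z, g c z ∂σ ≤ ε / 3 :=
      integral_sub_integral_le_of_ae_sub_le (hint θ) (hint c)
        (hσK.mono fun z hz => (abs_sub_lt_iff.mp (hclose z hz)).1.le)
    refine Set.mem_biUnion hct ?_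
    show ε / 3 ≤ |_|
    exact le_abs.mpr (Or.inr (by linarith))
  have hdev := tendsto_finsetSum t fun c _ =>
    tendsto_measure_abs_empiricalMean_sub_integral_ge (hg.uncurry_left c).measurable (hint c) hX
      hXσ hindep hε3
  rw [Finset.sum_const_zero] at hdev
  exact tendsto_of_tendsto_of_tendsto_of_le_of_le tendsto_const_nhds hdev (fun _ => zero_le)
    fun n => (measure_mono_ae (hsub n)).trans (measure_biUnion_finset_le t _)

theorem tendsto_measure_mem_of_tendsto_measure_empiricalMean_sub_iInf_gt
    [IsProbabilityMeasure P] {Θ : Type*} [TopologicalSpace Θ] [TopologicalSpace E]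
    [OpensMeasurableSpace E] {g : Θ → E → ℝ} (hg : Continuous (uncurry g))
    (hg₀ : ∀ θ z, 0 ≤ g θ z) {K : Set E} (hK : IsCompact K) (hσK : ∀ᵐ z ∂σ, z ∈ K)
    {S : Set Θ} (hS : IsCompact S) {ψ : Θ} {ε : ℝ} (hε : 0 < ε)
    (hgap : ∀ θ ∈ S, ∫ z, g ψ z ∂σ + 3 * ε ≤ ∫ z, g θ z ∂σ) (hX : ∀ i, Measurable (X i))
    (hXσ : ∀ i, P.map (X i) = σ) (hindep : Pairwise fun i j => IndepFun (X i) (X j) P)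
    {θseq : ℕ → Ω → Θ}
    (hmin : Tendsto (fun n => P {ω | empiricalMean (g (θseq n ω)) X n ω
      - ⨅ θ, empiricalMean (g θ) X n ω > ε}) atTop (𝓝 0)) :
    Tendsto (fun n => P {ω | θseq n ω ∈ S}) atTop (𝓝 0) := by
  have : IsProbabilityMeasure σ := hXσ 0 ▸ Measure.isProbabilityMeasure_map (hX 0).aemeasurable
  have hlower := tendsto_measure_exists_empiricalMean_lt_integral_sub hg hK hσK hS hX hXσ
    hindep hε
  have hψ := tendsto_measure_abs_empiricalMean_sub_integral_ge (hg.uncurry_left ψ).measurable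
    ((hg.uncurry_left ψ).integrable_of_ae_mem_isCompact hK hσK) hX hXσ hindep hε
  have hsub : ∀ n, {ω | θseq n ω ∈ S} ⊆
      {ω | empiricalMean (g (θseq n ω)) X n ω - ⨅ θ, empiricalMean (g θ) X n ω > ε} ∪
      {ω | ∃ θ ∈ S, empiricalMean (g θ) X n ω < ∫ z, g θ z ∂σ - ε} ∪
      {ω | ε ≤ |empiricalMean (g ψ) X n ω - ∫ z, g ψ z ∂σ|} := by
    intro n ω hω
    by_contra! hgood
    simp only [Set.mem_union, Set.mem_ofPred_eq, not_or, not_lt, not_le, not_exists, not_and,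
      gt_iff_lt] at hgood
    obtain ⟨⟨hmin_ω, hlower_ω⟩, hψ_ω⟩ := hgood
    have hinf : ⨅ θ, empiricalMean (g θ) X n ω ≤ empiricalMean (g ψ) X n ω :=
      ciInf_le ⟨0, Set.forall_mem_range.mpr fun θ => empiricalMean_nonneg (hg₀ θ) n ω⟩ ψ
    linarith [hgap _ hω, hlower_ω _ hω, (abs_lt.mp hψ_ω).2]
  have hbad := (hmin.add hlower).add hψ
  simp only [add_zero] at hbad
  exact tendsto_of_tendsto_of_tendsto_of_le_of_le tendsto_const_nhds hbad (fun _ => zero_le)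
    fun n => (measure_mono (hsub n)).trans <|
      (measure_union_le _ _).trans (add_le_add (measure_union_le _ _) le_rfl)

end LawOfLargeNumbers

theorem tendsto_measure_of_compl_subset_of_tendsto_measure {α ι : Type*} [MeasurableSpace α]
    {μ : Measure α} [IsProbabilityMeasure μ] {l : Filter ι} {s t : ι → Set α}
    (hst : ∀ i, (s i)ᶜ ⊆ t i) (ht : Tendsto (fun i => μ (t i)) l (𝓝 0)) :
    Tendsto (fun i => μ (s i)) l (𝓝 1) := by
  have hlim : Tendsto (fun i => 1 - μ (t i)) l (𝓝 1) := by
    simpa using ENNReal.Tendsto.sub tendsto_const_nhds ht (.inl ENNReal.one_ne_top)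
  refine tendsto_of_tendsto_of_tendsto_of_le_of_le hlim tendsto_const_nhds (fun i => ?_)
    fun _ => prob_le_one (μ := μ)
  rw [tsub_le_iff_right, ← measure_univ (μ := μ)]
  exact (measure_univ_le_add_compl (s i)).trans (add_le_add le_rfl (measure_mono (hst i)))

theorem stmt5_general (L : ℕ) (N : ℕ → ℕ) (hNL : N L = 1)
    (B K : ℝ)
    (ρ : ℝ → ℝ) (hρ : LocallyLipschitz ρ)
    (σ : Measure ((Fin (N 0) → ℝ) × ℝ)) (hσ : IsProbabilityMeasure σ)
    (hσsupp : σ ((Set.Icc (fun _ => -B) (fun _ => B) ×ˢ Set.Icc (-K) K)ᶜ) = 0)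
    (fσ : (Fin (N 0) → ℝ) → ℝ)
    -- the defining property of the regression function: the bias-variance decomposition
    (hreg : ∀ f : (Fin (N 0) → ℝ) → ℝ, Measurable f →
      (∫⁻ z, ENNReal.ofReal ((f z.1 - z.2) ^ 2) ∂σ)
        = (∫⁻ z, ENNReal.ofReal ((fσ z.1 - z.2) ^ 2) ∂σ)
          + ∫⁻ x, ENNReal.ofReal ((f x - fσ x) ^ 2) ∂(σ.map Prod.fst))
    -- `fσ` has no best approximation in the set of realizations w.r.t. `L²(σ_Ω)`
    (hnobest : ¬ ∃ Φ : NNParams L N,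
      eLpNorm (fun x => fσ x - nnRealizationScalar ρ L N hNL Φ x) 2 (σ.map Prod.fst)
        = ⨅ Ψ : NNParams L N,
            eLpNorm (fun x => fσ x - nnRealizationScalar ρ L N hNL Ψ x) 2 (σ.map Prod.fst))
    -- an i.i.d. sample sequence with distribution σ
    (Ω' : Type) (mΩ' : MeasurableSpace Ω') (P : Measure Ω') (hP : IsProbabilityMeasure P)
    (X : ℕ → Ω' → (Fin (N 0) → ℝ) × ℝ) (hXmeas : ∀ i, Measurable (X i))
    (hXdist : ∀ i, Measure.map (X i) P = σ)
    (hXindep : ProbabilityTheory.iIndepFun X P)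
    -- a sequence of (random) networks asymptotically minimizing the empirical risk
    (Φseq : ℕ → Ω' → NNParams L N)
    (hmin : ∀ ε : ℝ, 0 < ε →
      Tendsto (fun n : ℕ => P {ω : Ω' |
          (1 / (n : ℝ)) * ∑ i ∈ Finset.range n,
              (nnRealizationScalar ρ L N hNL (Φseq n ω) (X i ω).1 - (X i ω).2) ^ 2
          - (⨅ Ψ : NNParams L N, (1 / (n : ℝ)) * ∑ i ∈ Finset.range n,
              (nnRealizationScalar ρ L N hNL Ψ (X i ω).1 - (X i ω).2) ^ 2) > ε})
        atTop (nhds 0)) :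
    -- then ‖Φ_N‖_total → ∞ in probability
    ∀ C : ℝ, Tendsto (fun n : ℕ => P {ω : Ω' | C ≤ nnTotalNorm (Φseq n ω)}) atTop (nhds 1) := by
  intro C
  set F := nnRealizationScalar ρ L N hNL
  set loss : NNParams L N → (Fin (N 0) → ℝ) × ℝ → ℝ := fun Φ z => (F Φ z.1 - z.2) ^ 2
  set risk : NNParams L N → ℝ := fun Φ => ∫ z, loss Φ z ∂σ
  have hF : Continuous (uncurry F) := continuous_nnRealizationScalar hρ.continuous hNL
  have hloss : Continuous (uncurry loss) := by
    simp only [loss, uncurry_def]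
    fun_prop
  have hK : IsCompact (Set.Icc (fun _ : Fin (N 0) => -B) (fun _ => B) ×ˢ Set.Icc (-K) K) :=
    isCompact_Icc.prod isCompact_Icc
  have hσK := mem_ae_iff.mpr hσsupp
  have hball := isCompact_closedBall (0 : NNParams L N) |C|
  obtain ⟨Φs, -, hΦs⟩ := hball.exists_isMinOn ⟨0, Metric.mem_closedBall_self (abs_nonneg C)⟩
    (continuous_integral_of_ae_mem_isCompact hloss hK hσK).continuousOn
  obtain ⟨Ψs, hΨs⟩ : ∃ Ψ, risk Ψ < risk Φs := exists_integral_sq_sub_lt_of_not_exists_best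
    (fun Φ => (hF.uncurry_left Φ).measurable)
    (fun Φ => (hloss.uncurry_left Φ).integrable_of_ae_mem_isCompact hK hσK) hreg hnobest Φs
  have hgap : ∀ Φ ∈ Metric.closedBall 0 |C|, risk Ψs + 3 * ((risk Φs - risk Ψs) / 3) ≤ risk Φ :=
    fun Φ hΦ => by linarith [show risk Φs ≤ risk Φ from hΦs hΦ]
  refine tendsto_measure_of_compl_subset_of_tendsto_measure (fun n ω hω => ?_) <|
    tendsto_measure_mem_of_tendsto_measure_empiricalMean_sub_iInf_gt hloss
      (fun _ _ => sq_nonneg _) hK hσK hball (by linarith) hgap hXmeas hXdist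
      (fun i j hij => hXindep.indepFun hij) (hmin _ (by linarith))
  have hlt : nnTotalNorm (Φseq n ω) < C := not_le.mp hω
  exact mem_closedBall_zero_iff.mpr <|
    (norm_le_nnTotalNorm _).trans (hlt.le.trans (le_abs_self C))

/-- If the regression function has no best approximation in the set of
realizations (w.r.t. `L²(σ_Ω)`), then the total norms of (approximate) empirical-risk
minimizers explode in probability as the number of i.i.d. samples grows. -/
theorem stmt5 (L : ℕ) (hL : 1 ≤ L) (N : ℕ → ℕ) (hN : ∀ ℓ ≤ L, 0 < N ℓ) (hNL : N L = 1)
    (B K : ℝ) (hB : 0 < B) (hK : 0 < K)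
    (ρ : ℝ → ℝ) (hρ : LocallyLipschitz ρ)
    (σ : Measure ((Fin (N 0) → ℝ) × ℝ)) (hσ : IsProbabilityMeasure σ)
    (hσsupp : σ ((Set.Icc (fun _ => -B) (fun _ => B) ×ˢ Set.Icc (-K) K)ᶜ) = 0)
    (fσ : (Fin (N 0) → ℝ) → ℝ) (hfσmeas : Measurable fσ)
    -- the defining property of the regression function: the bias-variance decomposition
    (hreg : ∀ f : (Fin (N 0) → ℝ) → ℝ, Measurable f →
      (∫⁻ z, ENNReal.ofReal ((f z.1 - z.2) ^ 2) ∂σ)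
        = (∫⁻ z, ENNReal.ofReal ((fσ z.1 - z.2) ^ 2) ∂σ)
          + ∫⁻ x, ENNReal.ofReal ((f x - fσ x) ^ 2) ∂(σ.map Prod.fst))
    -- `fσ` has no best approximation in the set of realizations w.r.t. `L²(σ_Ω)`
    (hnobest : ¬ ∃ Φ : NNParams L N,
      eLpNorm (fun x => fσ x - nnRealizationScalar ρ L N hNL Φ x) 2 (σ.map Prod.fst)
        = ⨅ Ψ : NNParams L N,
            eLpNorm (fun x => fσ x - nnRealizationScalar ρ L N hNL Ψ x) 2 (σ.map Prod.fst))
    -- an i.i.d. sample sequence with distribution σ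
    (Ω' : Type) (mΩ' : MeasurableSpace Ω') (P : Measure Ω') (hP : IsProbabilityMeasure P)
    (X : ℕ → Ω' → (Fin (N 0) → ℝ) × ℝ) (hXmeas : ∀ i, Measurable (X i))
    (hXdist : ∀ i, Measure.map (X i) P = σ)
    (hXindep : ProbabilityTheory.iIndepFun X P)
    -- a sequence of (random) networks asymptotically minimizing the empirical risk
    (Φseq : ℕ → Ω' → NNParams L N)
    (hmin : ∀ ε : ℝ, 0 < ε →
      Tendsto (fun n : ℕ => P {ω : Ω' |
          (1 / (n : ℝ)) * ∑ i ∈ Finset.range n,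
              (nnRealizationScalar ρ L N hNL (Φseq n ω) (X i ω).1 - (X i ω).2) ^ 2
          - (⨅ Ψ : NNParams L N, (1 / (n : ℝ)) * ∑ i ∈ Finset.range n,
              (nnRealizationScalar ρ L N hNL Ψ (X i ω).1 - (X i ω).2) ^ 2) > ε})
        atTop (nhds 0)) :
    -- then ‖Φ_N‖_total → ∞ in probability
    ∀ C : ℝ, Tendsto (fun n : ℕ => P {ω : Ω' | C ≤ nnTotalNorm (Φseq n ω)}) atTop (nhds 1) :=
  stmt5_general L N hNL B K ρ hρ σ hσ hσsupp fσ hreg hnobest Ω' mΩ' P hP X hXmeas hXdist hXindep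
    Φseq hmin
end

section
/- Let S = (d, N_1, ..., N_L) be a neural network architecture, let C > 0, let Ω ⊆ ℝ^d be Borel measurable and bounded, and let ρ(x) = max{0, x} be the ReLU activation function. Then the set RNN_ρ^{Ω,C}(S) := { R_ρ^Ω(Φ) : Φ a neural network with architecture S and ‖Φ‖_scaling ≤ C } is closed in L^p(μ; ℝ^{N_L}) for every p ∈ [1, ∞] and every finite Borel measure μ on Ω; if moreover Ω is compact, then RNN_ρ^{Ω,C}(S) is closed in C(Ω; ℝ^{N_L}) with the sup norm. -/
open scoped BigOperators ENNReal NNReal Pointwise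
open Filter MeasureTheory Topology

/-! On the ball `‖x‖ ≤ R`, the first layer, whose weights are bounded by `C`, has pre-activations
`A x` of size at most `M = N₀ C R`. Clamping its bias to `[-M, M]` changes the ReLU outputs only by
a constant offset, which the next layer absorbs into its bias, and the new outputs lie in a ball
again. Inductively every hidden bias becomes bounded without changing the realization on the ball,
and the last bias is then bounded by the output at a single point. Hence a sequence of realizations
that converges at one point of a bounded set can be represented by parameters in a compact set; a
convergent subsequence of parameters yields, by continuity of the realization in the parameters, a
network realizing the pointwise limit. In `Lᵖ` the pointwise limit comes from an a.e. convergent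
subsequence, in `C(Ω)` from uniform convergence. -/

local notation "relu" => fun t : ℝ => max 0 t

open Matrix

theorem norm_mulVec_le_of_le {m n : Type*} [Fintype m] [Fintype n] {A : m → n → ℝ} {x : n → ℝ}
    {C R : ℝ} (hA : ‖A‖ ≤ C) (hx : ‖x‖ ≤ R) : ‖A *ᵥ x‖ ≤ Fintype.card n * (C * R) := by
  have hC : 0 ≤ C := (norm_nonneg _).trans hA
  have hR : 0 ≤ R := (norm_nonneg _).trans hx
  refine (pi_norm_le_iff_of_nonneg (by positivity : (0 : ℝ) ≤ _)).2 fun i => ?_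
  calc ‖(A *ᵥ x) i‖ ≤ ∑ j, ‖A i j * x j‖ := norm_sum_le _ _
    _ = ∑ j, ‖A i j‖ * ‖x j‖ := by simp only [norm_mul]
    _ ≤ ∑ _j : n, C * R := by
        gcongr with j
        · exact ((norm_le_pi_norm (A i) j).trans (norm_le_pi_norm A i)).trans hA
        · exact (norm_le_pi_norm x j).trans hx
    _ = Fintype.card n * (C * R) := by simp

theorem norm_relu_le {n : Type*} [Fintype n] (v : n → ℝ) : ‖fun i => relu (v i)‖ ≤ ‖v‖ :=
  (pi_norm_le_iff_of_nonneg (norm_nonneg v)).2 fun i =>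
    (abs_max_le_max_abs_abs.trans (by simp)).trans (norm_le_pi_norm v i)

theorem relu_add_eq_relu_add_clamp {M z b : ℝ} (hz : |z| ≤ M) :
    relu (z + b) = relu (z + max (-M) (min b M)) + max (b - M) 0 := by
  obtain ⟨hz₁, hz₂⟩ := abs_le.1 hz
  rcases le_total b M with hbM | hMb
  · rcases le_total (-M) b with hb | hb
    · simp [hbM, hb]
    · simp [hbM, hb, show z + b ≤ 0 by linarith, show z + -M ≤ 0 by linarith]
  · simp [hMb, show -M ≤ M by linarith, show 0 ≤ z + b by linarith,
      show 0 ≤ z + M by linarith]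

theorem abs_clamp_le {M b : ℝ} (hM : 0 ≤ M) : |max (-M) (min b M)| ≤ M :=
  abs_le.2 ⟨le_max_left _ _, max_le (by linarith) (min_le_right _ _)⟩

section Unfolding

variable {ρ : ℝ → ℝ} {L : ℕ} {N : ℕ → ℕ}

theorem nnAffine_eq_mulVec {ℓ : ℕ} (W : NNLayer N ℓ) (x : Fin (N ℓ) → ℝ) :
    nnAffine W x = W.1 *ᵥ x + W.2 := rfl

theorem nnRealization_succ (Φ : NNParams (L + 1) N) (x : Fin (N 0) → ℝ) :
    nnRealization ρ (L + 1) N Φ x = nnAffine (Φ (Fin.last L)) (nnHidden ρ L N (Fin.init Φ) x) :=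
  rfl

theorem nnRealization_succ_succ (Φ : NNParams (L + 2) N) (x : Fin (N 0) → ℝ) :
    nnRealization ρ (L + 2) N Φ x =
      nnRealization ρ (L + 1) (fun k => N (k + 1)) (Fin.tail Φ)
        fun i => ρ (nnAffine (Φ ⟨0, L.succ.succ_pos⟩) x i) := rfl

end Unfolding

section Continuity

variable {X : Type*} [TopologicalSpace X] {ρ : ℝ → ℝ} {N : ℕ → ℕ}

@[fun_prop]
theorem Continuous.nnAffine {ℓ : ℕ} {W : X → NNLayer N ℓ} {x : X → Fin (N ℓ) → ℝ}
    (hW : Continuous W) (hx : Continuous x) : Continuous fun p => nnAffine (W p) (x p) :=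
  (hW.fst.matrix_mulVec hx).add hW.snd

theorem Continuous.nnHidden (hρ : Continuous ρ) {L : ℕ} {Θ : X → NNParams L N}
    {x : X → Fin (N 0) → ℝ} (hΘ : Continuous Θ) (hx : Continuous x) :
    Continuous fun p => nnHidden ρ L N (Θ p) (x p) := by
  induction L generalizing N with
  | zero => exact hx
  | succ L ih =>
    exact ih (N := fun k => N (k + 1)) (Θ := fun p => Fin.tail (Θ p)) (by fun_prop) (by fun_prop)

theorem Continuous.nnRealization (hρ : Continuous ρ) {L : ℕ} {Θ : X → NNParams L N}
    {x : X → Fin (N 0) → ℝ} (hΘ : Continuous Θ) (hx : Continuous x) :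
    Continuous fun p => nnRealization ρ L N (Θ p) (x p) := by
  cases L with
  | zero => exact hx
  | succ L => exact Continuous.nnAffine (by fun_prop) ((hρ.nnHidden (by fun_prop) hx))

end Continuity

section Normalization

variable {L : ℕ} {N : ℕ → ℕ}

def nnShiftInput (Φ : NNParams (L + 1) N) (δ : Fin (N 0) → ℝ) : NNParams (L + 1) N :=
  let W := Φ ⟨0, L.succ_pos⟩
  Fin.cons (W.1, W.2 + W.1 *ᵥ δ) (Fin.tail Φ)

theorem nnShiftInput_fst (Φ : NNParams (L + 1) N) (δ : Fin (N 0) → ℝ) (ℓ : Fin (L + 1)) :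
    (nnShiftInput Φ δ ℓ).1 = (Φ ℓ).1 := by
  cases ℓ using Fin.cases <;> rfl

theorem nnAffine_add {ℓ : ℕ} (W : NNLayer N ℓ) (x δ : Fin (N ℓ) → ℝ) :
    nnAffine W (x + δ) = nnAffine (W.1, W.2 + W.1 *ᵥ δ) x := by
  funext i
  simp only [nnAffine, Pi.add_apply, mulVec, dotProduct, mul_add, Finset.sum_add_distrib]
  ring

theorem nnRealization_add (ρ : ℝ → ℝ) (Φ : NNParams (L + 1) N) (x δ : Fin (N 0) → ℝ) :
    nnRealization ρ (L + 1) N Φ (x + δ) = nnRealization ρ (L + 1) N (nnShiftInput Φ δ) x := by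
  cases L with
  | zero => exact nnAffine_add _ x δ
  | succ L =>
    rw [nnRealization_succ_succ, nnRealization_succ_succ, nnAffine_add]
    rfl

theorem exists_clamped_bias {ℓ : ℕ} (W : NNLayer N ℓ) {C R : ℝ} (hW : ‖W.1‖ ≤ C) (hR : 0 ≤ R) :
    ∃ b δ : Fin (N (ℓ + 1)) → ℝ, ‖b‖ ≤ N ℓ * (C * R) ∧ ∀ x, ‖x‖ ≤ R →
      (fun i => relu (nnAffine W x i)) = (fun i => relu (nnAffine (W.1, b) x i)) + δ ∧
      ‖fun i => relu (nnAffine (W.1, b) x i)‖ ≤ 2 * (N ℓ * (C * R)) := by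
  set M := N ℓ * (C * R)
  have hM : 0 ≤ M := by have := (norm_nonneg _).trans hW; positivity
  have hWx : ∀ x, ‖x‖ ≤ R → ‖W.1 *ᵥ x‖ ≤ M := fun x hx => by
    simpa only [Fintype.card_fin] using norm_mulVec_le_of_le hW hx
  set b : Fin (N (ℓ + 1)) → ℝ := fun i => max (-M) (min (W.2 i) M)
  have hb : ‖b‖ ≤ M := (pi_norm_le_iff_of_nonneg hM).2 fun i => abs_clamp_le hM
  refine ⟨b, fun i => max (W.2 i - M) 0, hb, fun x hx => ⟨?_, ?_⟩⟩
  · funext i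
    exact relu_add_eq_relu_add_clamp ((norm_le_pi_norm (W.1 *ᵥ x) i).trans (hWx x hx))
  · calc _ ≤ ‖nnAffine (W.1, b) x‖ := norm_relu_le _
      _ ≤ ‖W.1 *ᵥ x‖ + ‖b‖ := norm_add_le _ _
      _ ≤ 2 * M := by linarith [hWx x hx]

theorem exists_nnRealization_eqOn_hidden_bias_le (L : ℕ) (N : ℕ → ℕ) {C R : ℝ} (hC : 0 ≤ C)
    (hR : 0 ≤ R) :
    ∃ B, ∀ Φ : NNParams (L + 1) N, (∀ ℓ, ‖(Φ ℓ).1‖ ≤ C) → ∃ Φ' : NNParams (L + 1) N,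
      (∀ ℓ, (Φ' ℓ).1 = (Φ ℓ).1) ∧ (∀ ℓ : Fin L, ‖(Φ' ℓ.castSucc).2‖ ≤ B) ∧
      ∀ x, ‖x‖ ≤ R → nnRealization relu (L + 1) N Φ' x = nnRealization relu (L + 1) N Φ x := by
  induction L generalizing N R with
  | zero => exact ⟨0, fun Φ _ => ⟨Φ, fun _ => rfl, fun ℓ => ℓ.elim0, fun _ _ => rfl⟩⟩
  | succ L ih =>
    set M := N 0 * (C * R)
    obtain ⟨B, hB⟩ := ih (fun k => N (k + 1)) (R := 2 * M) (by positivity)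
    refine ⟨max M B, fun Φ hΦ => ?_⟩
    obtain ⟨b, δ, hb, hsplit⟩ := exists_clamped_bias (Φ ⟨0, L.succ.succ_pos⟩) (hΦ _) hR
    obtain ⟨Ψ, hΨ_fst, hΨ_bias, hΨ⟩ := hB (nnShiftInput (Fin.tail Φ) δ) fun ℓ => by
      rw [nnShiftInput_fst]
      exact hΦ _
    refine ⟨Fin.cons ((Φ ⟨0, L.succ.succ_pos⟩).1, b) Ψ, fun ℓ => ?_, fun ℓ => ?_, fun x hx => ?_⟩
    · cases ℓ using Fin.cases with
      | zero => rfl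
      | succ ℓ => exact (hΨ_fst ℓ).trans (nnShiftInput_fst _ _ _)
    · cases ℓ using Fin.cases with
      | zero => exact hb.trans (le_max_left _ _)
      | succ ℓ => exact (hΨ_bias ℓ).trans (le_max_right _ _)
    · obtain ⟨hx_split, hx_norm⟩ := hsplit x hx
      rw [nnRealization_succ_succ, nnRealization_succ_succ, hx_split, nnRealization_add]
      exact hΨ _ hx_norm

end Normalization

section Compactness

variable {L : ℕ} {N : ℕ → ℕ}

def nnBoundedParams (L : ℕ) (N : ℕ → ℕ) (C B : ℝ) : Set (NNParams L N) :=
  Set.univ.pi fun _ => Metric.closedBall 0 C ×ˢ Metric.closedBall 0 B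

theorem mem_nnBoundedParams {C B : ℝ} {Φ : NNParams L N} :
    Φ ∈ nnBoundedParams L N C B ↔ ∀ ℓ, ‖(Φ ℓ).1‖ ≤ C ∧ ‖(Φ ℓ).2‖ ≤ B := by
  simp [nnBoundedParams]

theorem isCompact_nnBoundedParams (C B : ℝ) : IsCompact (nnBoundedParams L N C B) :=
  isCompact_univ_pi fun _ => (isCompact_closedBall _ _).prod (isCompact_closedBall _ _)

theorem continuous_relu : Continuous relu := by fun_prop

theorem exists_mem_nnBoundedParams_eqOn (L : ℕ) (N : ℕ → ℕ) {C R M : ℝ} (hC : 0 ≤ C)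
    (hR : 0 ≤ R) {x₀ : Fin (N 0) → ℝ} (hx₀ : ‖x₀‖ ≤ R) :
    ∃ B, ∀ Φ : NNParams (L + 1) N, (∀ ℓ, ‖(Φ ℓ).1‖ ≤ C) →
      ‖nnRealization relu (L + 1) N Φ x₀‖ ≤ M →
      ∃ Φ' ∈ nnBoundedParams (L + 1) N C B,
        ∀ x, ‖x‖ ≤ R → nnRealization relu (L + 1) N Φ' x = nnRealization relu (L + 1) N Φ x := by
  obtain ⟨B₀, hB₀⟩ := exists_nnRealization_eqOn_hidden_bias_le L N hC hR
  obtain ⟨K, hK⟩ := ((isCompact_nnBoundedParams (L := L) (N := N) C B₀).prod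
    (isCompact_closedBall 0 R)).exists_bound_of_continuousOn
    (continuous_relu.nnHidden continuous_fst continuous_snd).continuousOn
  refine ⟨max B₀ (M + N L * (C * K)), fun Φ hΦ hΦx₀ => ?_⟩
  obtain ⟨Φ', hfst, hbias, hΦ'⟩ := hB₀ Φ hΦ
  have hweight : ∀ ℓ, ‖(Φ' ℓ).1‖ ≤ C := fun ℓ => by rw [hfst]; exact hΦ ℓ
  have hhidden : ‖nnHidden relu L N (Fin.init Φ') x₀‖ ≤ K :=
    hK (Fin.init Φ', x₀) ⟨mem_nnBoundedParams.2 fun ℓ => ⟨hweight _, hbias ℓ⟩,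
      mem_closedBall_zero_iff.2 hx₀⟩
  refine ⟨Φ', mem_nnBoundedParams.2 fun ℓ => ⟨hweight ℓ, ?_⟩, hΦ'⟩
  cases ℓ using Fin.lastCases with
  | last =>
    have hlast : (Φ' (Fin.last L)).2 = nnRealization relu (L + 1) N Φ' x₀ -
        ((Φ' (Fin.last L)).1 *ᵥ nnHidden relu L N (Fin.init Φ') x₀ : Fin (N (L + 1)) → ℝ) := by
      rw [nnRealization_succ, nnAffine_eq_mulVec]
      exact (add_sub_cancel_left _ _).symm
    calc ‖(Φ' (Fin.last L)).2‖
        ≤ ‖nnRealization relu (L + 1) N Φ' x₀‖ +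
            ‖(Φ' (Fin.last L)).1 *ᵥ nnHidden relu L N (Fin.init Φ') x₀‖ := by
          rw [hlast]
          exact norm_sub_le _ _
      _ ≤ M + N L * (C * K) := by
          have hmul := norm_mulVec_le_of_le (hweight (Fin.last L)) hhidden
          rw [Fintype.card_fin] at hmul
          rw [hΦ' x₀ hx₀]
          exact add_le_add hΦx₀ hmul
      _ ≤ _ := le_max_right _ _
  | cast ℓ => exact (hbias ℓ).trans (le_max_left _ _)

theorem exists_subseq_tendsto_nnRealization {C R M : ℝ} (hC : 0 ≤ C) (hR : 0 ≤ R)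
    (Φ : ℕ → NNParams (L + 1) N) (hΦ : ∀ n ℓ, ‖(Φ n ℓ).1‖ ≤ C) {x₀ : Fin (N 0) → ℝ}
    (hx₀ : ‖x₀‖ ≤ R) (hM : ∀ n, ‖nnRealization relu (L + 1) N (Φ n) x₀‖ ≤ M) :
    ∃ Ψ : NNParams (L + 1) N, (∀ ℓ, ‖(Ψ ℓ).1‖ ≤ C) ∧ ∃ φ : ℕ → ℕ, StrictMono φ ∧
      ∀ x, ‖x‖ ≤ R → Tendsto (fun k => nnRealization relu (L + 1) N (Φ (φ k)) x) atTop
        (𝓝 (nnRealization relu (L + 1) N Ψ x)) := by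
  obtain ⟨B, hB⟩ := exists_mem_nnBoundedParams_eqOn L N (M := M) hC hR hx₀
  choose Φ' hΦ'_mem hΦ' using fun n => hB (Φ n) (hΦ n) (hM n)
  obtain ⟨Ψ, hΨ, φ, hφ, hlim⟩ := (isCompact_nnBoundedParams C B).tendsto_subseq hΦ'_mem
  refine ⟨Ψ, fun ℓ => (mem_nnBoundedParams.1 hΨ ℓ).1, φ, hφ, fun x hx => ?_⟩
  simp only [← hΦ' _ x hx]
  exact ((continuous_relu.nnRealization continuous_id continuous_const).tendsto Ψ).comp hlim

end Compactness

theorem nnScalingNorm_le_iff {L : ℕ} {N : ℕ → ℕ} (Φ : NNParams (L + 1) N) {C : ℝ} :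
    nnScalingNorm Φ ≤ C ↔ ∀ ℓ, ‖(Φ ℓ).1‖ ≤ C :=
  ciSup_le_iff (Set.finite_range _).bddAbove

theorem exists_tendsto_nnRealization_of_tendsto {L : ℕ} {N : ℕ → ℕ} {A : Set (Fin (N 0) → ℝ)}
    (hA : Bornology.IsBounded A) {C : ℝ} (Φ : ℕ → NNParams L N)
    (hΦ : ∀ n, nnScalingNorm (Φ n) ≤ C)
    (hconv : ∀ x ∈ A, ∃ y, Tendsto (fun n => nnRealization relu L N (Φ n) x) atTop (𝓝 y)) :
    ∃ Ψ : NNParams L N, nnScalingNorm Ψ ≤ C ∧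
      ∀ x ∈ A, Tendsto (fun n => nnRealization relu L N (Φ n) x) atTop
        (𝓝 (nnRealization relu L N Ψ x)) := by
  cases L with
  | zero => exact ⟨Φ 0, hΦ 0, fun x _ => tendsto_const_nhds⟩
  | succ L =>
    obtain rfl | ⟨x₀, hx₀⟩ := A.eq_empty_or_nonempty
    · exact ⟨Φ 0, hΦ 0, by simp⟩
    obtain ⟨R, hR, hAR⟩ := hA.subset_closedBall_lt 0 0
    have hnorm : ∀ x ∈ A, ‖x‖ ≤ R := fun x hx => mem_closedBall_zero_iff.1 (hAR hx)
    have hweight : ∀ n ℓ, ‖(Φ n ℓ).1‖ ≤ C := fun n => (nnScalingNorm_le_iff _).1 (hΦ n)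
    obtain ⟨y₀, hy₀⟩ := hconv x₀ hx₀
    obtain ⟨M, hM⟩ := isBounded_iff_forall_norm_le.1 (Metric.isBounded_range_of_tendsto _ hy₀)
    obtain ⟨Ψ, hΨ, φ, hφ, hlim⟩ := exists_subseq_tendsto_nnRealization
      ((norm_nonneg _).trans (hweight 0 0)) hR.le Φ hweight (hnorm x₀ hx₀)
      fun n => hM _ ⟨n, rfl⟩
    refine ⟨Ψ, (nnScalingNorm_le_iff Ψ).2 hΨ, fun x hx => ?_⟩
    obtain ⟨y, hy⟩ := hconv x hx
    rwa [tendsto_nhds_unique (hy.comp hφ.tendsto_atTop) (hlim x (hnorm x hx))] at hy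

theorem stmt6_general (L : ℕ) (N : ℕ → ℕ)
    (C : ℝ)
    (Ω : Set (Fin (N 0) → ℝ)) (hbdd : Bornology.IsBounded Ω) :
    (∀ μ : Measure (Fin (N 0) → ℝ), IsFiniteMeasure μ → μ Ωᶜ = 0 →
      ∀ p : ℝ≥0∞, 1 ≤ p →
        ∀ f : (Fin (N 0) → ℝ) → (Fin (N L) → ℝ), AEStronglyMeasurable f μ →
          (∀ ε : ℝ≥0∞, 0 < ε → ∃ Φ : NNParams L N, nnScalingNorm Φ ≤ C ∧
            eLpNorm (fun x => f x - nnRealization (fun t => max 0 t) L N Φ x) p μ < ε) →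
          ∃ Ψ : NNParams L N, nnScalingNorm Ψ ≤ C ∧
            f =ᵐ[μ] fun x => nnRealization (fun t => max 0 t) L N Ψ x) ∧
    (IsCompact Ω →
      IsClosed {f : C(Ω, Fin (N L) → ℝ) | ∃ Φ : NNParams L N, nnScalingNorm Φ ≤ C ∧
        ∀ x : Ω, f x = nnRealization (fun t => max 0 t) L N Φ x.val}) := by
  refine ⟨fun μ _ hΩ p hp f hf happrox => ?_, fun hΩ => ?_⟩
  · choose Φ hΦ hΦ_err using fun n : ℕ =>
      happrox (n : ℝ≥0∞)⁻¹ (ENNReal.inv_pos.2 (ENNReal.natCast_ne_top n))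
    have hmeasure : TendstoInMeasure μ (fun n => nnRealization relu L N (Φ n)) atTop f :=
      tendstoInMeasure_of_tendsto_eLpNorm (zero_lt_one.trans_le hp).ne' (fun _ =>
          (continuous_relu.nnRealization continuous_const continuous_id).aestronglyMeasurable)
        hf <| tendsto_of_tendsto_of_tendsto_of_le_of_le tendsto_const_nhds
          ENNReal.tendsto_inv_nat_nhds_zero (fun _ => zero_le)
          fun n => (eLpNorm_sub_comm _ _ _ _).trans_le (hΦ_err n).le
    obtain ⟨ns, -, hae⟩ := hmeasure.exists_seq_tendsto_ae
    obtain ⟨Ψ, hΨ, hlim⟩ := exists_tendsto_nnRealization_of_tendsto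
      (A := {x | x ∈ Ω ∧ Tendsto (fun n => nnRealization relu L N (Φ (ns n)) x) atTop (𝓝 (f x))})
      (hbdd.subset fun _ hx => hx.1) (Φ ∘ ns) (fun n => hΦ _) fun x hx => ⟨f x, hx.2⟩
    refine ⟨Ψ, hΨ, ?_⟩
    filter_upwards [hae, mem_ae_iff.2 hΩ] with x hx hxΩ
    exact tendsto_nhds_unique hx (hlim x ⟨hxΩ, hx⟩)
  · have : CompactSpace Ω := isCompact_iff_compactSpace.1 hΩ
    refine IsSeqClosed.isClosed fun g f hg hgf => ?_
    choose Φ hΦ hgΦ using hg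
    have hpoint (x : Ω) : Tendsto (fun n => nnRealization relu L N (Φ n) x) atTop (𝓝 (f x)) := by
      simpa only [Function.comp_def, hgΦ] using ((continuous_eval_const x).tendsto f).comp hgf
    obtain ⟨Ψ, hΨ, hlim⟩ := exists_tendsto_nnRealization_of_tendsto hbdd Φ hΦ
      fun x hx => ⟨f ⟨x, hx⟩, hpoint ⟨x, hx⟩⟩
    exact ⟨Ψ, hΨ, fun x => tendsto_nhds_unique (hpoint x) (hlim x x.2)⟩

/-- For the ReLU activation, the set of realizations of networks with
`C`-bounded scaling weights (arbitrary biases) is closed in `L^p(μ; ℝ^{N L})` for every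
`p ∈ [1,∞]` and every finite Borel measure `μ` on the bounded measurable set `Ω`, and
closed in `C(Ω; ℝ^{N L})` if `Ω` is compact. -/
theorem stmt6 (L : ℕ) (hL : 1 ≤ L) (N : ℕ → ℕ) (hN : ∀ ℓ ≤ L, 0 < N ℓ)
    (C : ℝ) (hC : 0 < C)
    (Ω : Set (Fin (N 0) → ℝ)) (hmeas : MeasurableSet Ω) (hbdd : Bornology.IsBounded Ω) :
    (∀ μ : Measure (Fin (N 0) → ℝ), IsFiniteMeasure μ → μ Ωᶜ = 0 →
      ∀ p : ℝ≥0∞, 1 ≤ p →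
        ∀ f : (Fin (N 0) → ℝ) → (Fin (N L) → ℝ), AEStronglyMeasurable f μ →
          (∀ ε : ℝ≥0∞, 0 < ε → ∃ Φ : NNParams L N, nnScalingNorm Φ ≤ C ∧
            eLpNorm (fun x => f x - nnRealization (fun t => max 0 t) L N Φ x) p μ < ε) →
          ∃ Ψ : NNParams L N, nnScalingNorm Ψ ≤ C ∧
            f =ᵐ[μ] fun x => nnRealization (fun t => max 0 t) L N Ψ x) ∧
    (IsCompact Ω →
      IsClosed {f : C(Ω, Fin (N L) → ℝ) | ∃ Φ : NNParams L N, nnScalingNorm Φ ≤ C ∧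
        ∀ x : Ω, f x = nnRealization (fun t => max 0 t) L N Φ x.val}) :=
  stmt6_general L N C Ω hbdd
end

section
/- Let S = (d, N_1, ..., N_L) be a neural network architecture with N_0 := d, let M ∈ ℕ, let ρ : ℝ → ℝ be locally Lipschitz continuous, let Ω ⊆ ℝ^d be compact, and let Λ : C(Ω; ℝ^{N_L}) → ℝ^M be locally Lipschitz continuous with respect to the sup norm on C(Ω; ℝ^{N_L}). If M > Σ_{ℓ=1}^L (N_{ℓ-1} + 1) N_ℓ, then the image Λ(RNN_ρ^Ω(S)) ⊆ ℝ^M is a set of Lebesgue measure zero. -/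
open scoped BigOperators ENNReal NNReal Pointwise
open Filter MeasureTheory Topology

open Set Module

theorem LocallyLipschitz.pi {α ι : Type*} [Fintype ι] {π : ι → Type*} [PseudoEMetricSpace α]
    [∀ i, PseudoEMetricSpace (π i)] {f : α → ∀ i, π i}
    (hf : ∀ i, LocallyLipschitz fun a => f a i) : LocallyLipschitz f := by
  classical
  intro a
  choose K t ht hK using fun i => hf i a
  refine ⟨Finset.univ.sup K, ⋂ i, t i, iInter_mem.2 ht, fun b hb c hc => ?_⟩
  rw [edist_pi_def]
  refine Finset.sup_le fun i _ => (hK i (mem_iInter.1 hb i) (mem_iInter.1 hc i)).trans ?_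
  gcongr
  exact_mod_cast Finset.le_sup (Finset.mem_univ i)

theorem LocallyLipschitz.apply {α ι : Type*} {π : ι → Type*} [PseudoEMetricSpace α]
    [Fintype ι] [∀ i, PseudoEMetricSpace (π i)] {f : α → ∀ i, π i}
    (hf : LocallyLipschitz f) (i : ι) : LocallyLipschitz fun a => f a i :=
  (LipschitzWith.eval i).locallyLipschitz.comp hf

theorem LocallyLipschitz.exists_lipschitzOnWith_slices {X K Y : Type*} [PseudoEMetricSpace X]
    [PseudoEMetricSpace K] [CompactSpace K] [PseudoEMetricSpace Y] {f : X × K → Y}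
    (hf : LocallyLipschitz f) (x₀ : X) :
    ∃ C, ∃ U ∈ 𝓝 x₀, ∀ k, LipschitzOnWith C (fun x => f (x, k)) U := by
  classical
  have hbox : ∀ k : K, ∃ C, ∃ U ∈ 𝓝 x₀, ∃ V ∈ 𝓝 k, LipschitzOnWith C f (U ×ˢ V) := by
    intro k
    obtain ⟨C, t, ht, hC⟩ := hf (x₀, k)
    obtain ⟨U, hU, V, hV, hUV⟩ := mem_nhds_prod_iff.1 ht
    exact ⟨C, U, hU, V, hV, hC.mono hUV⟩
  choose C U hU V hV hC using hbox
  obtain ⟨s, hs⟩ := CompactSpace.elim_nhds_subcover V hV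
  refine ⟨s.sup C, ⋂ k ∈ s, U k, (Finset.iInter_mem_sets s).2 fun k _ => hU k, ?_⟩
  intro k x hx x' hx'
  obtain ⟨j, hj, hkj⟩ := mem_iUnion₂.1 (hs ▸ mem_univ k : k ∈ ⋃ j ∈ s, V j)
  calc edist (f (x, k)) (f (x', k))
      ≤ C j * edist (x, k) (x', k) :=
        hC j ⟨mem_iInter₂.1 hx j hj, hkj⟩ ⟨mem_iInter₂.1 hx' j hj, hkj⟩
    _ ≤ s.sup C * edist x x' := by
        rw [Prod.edist_eq, edist_self, max_eq_left zero_le]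
        gcongr
        exact_mod_cast Finset.le_sup hj

theorem LocallyLipschitz.curry {X K Y : Type*} [PseudoMetricSpace X] [PseudoMetricSpace K]
    [CompactSpace K] [PseudoMetricSpace Y] {f : C(X × K, Y)} (hf : LocallyLipschitz f) :
    LocallyLipschitz f.curry := by
  intro x₀
  obtain ⟨C, U, hU, hC⟩ := hf.exists_lipschitzOnWith_slices x₀
  refine ⟨C, U, hU, LipschitzOnWith.of_dist_le_mul fun x hx x' hx' => ?_⟩
  exact (ContinuousMap.dist_le (by positivity)).2 fun k => (hC k).dist_le_mul x hx x' hx'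

theorem LocallyLipschitz.volume_range_eq_zero {E ι : Type*} [NormedAddCommGroup E]
    [NormedSpace ℝ E] [FiniteDimensional ℝ E] [Fintype ι] {f : E → ι → ℝ}
    (hf : LocallyLipschitz f) (h : finrank ℝ E < Fintype.card ι) : volume (range f) = 0 := by
  have hdim : dimH (range f) < ((Fintype.card ι : ℝ≥0) : ℝ≥0∞) :=
    calc dimH (range f) ≤ dimH (univ : Set E) := dimH_range_le_of_locally_lipschitzOn hf
      _ = finrank ℝ E := Real.dimH_univ_eq_finrank E
      _ < ((Fintype.card ι : ℝ≥0) : ℝ≥0∞) := by exact_mod_cast h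
  refine measure_zero_of_dimH_lt ?_ hdim
  rw [NNReal.coe_natCast, hausdorffMeasure_pi_real]

theorem locallyLipschitz_nnAffine (N : ℕ → ℕ) (ℓ : ℕ) :
    LocallyLipschitz fun p : NNLayer N ℓ × (Fin (N ℓ) → ℝ) => nnAffine p.1 p.2 := by
  refine ContDiff.locallyLipschitz (𝕂 := ℝ) (contDiff_pi.2 fun i => ?_)
  unfold nnAffine
  refine ContDiff.add (ContDiff.sum fun j _ => ContDiff.mul ?_ ?_) ?_ <;> fun_prop

theorem LocallyLipschitz.nnAffine {α : Type*} [PseudoEMetricSpace α] {N : ℕ → ℕ} {ℓ : ℕ}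
    {W : α → NNLayer N ℓ} {x : α → Fin (N ℓ) → ℝ} (hW : LocallyLipschitz W)
    (hx : LocallyLipschitz x) : LocallyLipschitz fun a => _root_.nnAffine (W a) (x a) :=
  ((locallyLipschitz_nnAffine N ℓ).comp (hW.prodMk hx) :)

section

variable {ρ : ℝ → ℝ}

theorem locallyLipschitz_nnHidden (hρ : LocallyLipschitz ρ) (L : ℕ) (N : ℕ → ℕ) :
    LocallyLipschitz fun p : NNParams L N × (Fin (N 0) → ℝ) => nnHidden ρ L N p.1 p.2 := by
  induction L generalizing N with
  | zero => exact LipschitzWith.prod_snd.locallyLipschitz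
  | succ L ih =>
    have hΦ : LocallyLipschitz fun p : NNParams (L + 1) N × (Fin (N 0) → ℝ) => p.1 :=
      LipschitzWith.prod_fst.locallyLipschitz
    have hx : LocallyLipschitz fun p : NNParams (L + 1) N × (Fin (N 0) → ℝ) => p.2 :=
      LipschitzWith.prod_snd.locallyLipschitz
    have hfirstLayer : LocallyLipschitz fun p : NNParams (L + 1) N × (Fin (N 0) → ℝ) =>
        ((fun ℓ : Fin L => p.1 ⟨ℓ.val + 1, Nat.succ_lt_succ ℓ.isLt⟩),
          fun i => ρ (nnAffine (p.1 ⟨0, Nat.succ_pos L⟩) p.2 i)) :=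
      (LocallyLipschitz.pi fun _ => hΦ.apply _).prodMk
        (LocallyLipschitz.pi fun i => hρ.comp (((hΦ.apply _).nnAffine hx).apply i))
    exact ((ih fun k => N (k + 1)).comp hfirstLayer :)

theorem locallyLipschitz_nnRealization (hρ : LocallyLipschitz ρ) (L : ℕ) (N : ℕ → ℕ) :
    LocallyLipschitz fun p : NNParams L N × (Fin (N 0) → ℝ) => nnRealization ρ L N p.1 p.2 := by
  cases L with
  | zero => exact LipschitzWith.prod_snd.locallyLipschitz
  | succ L =>
    have hΦ : LocallyLipschitz fun p : NNParams (L + 1) N × (Fin (N 0) → ℝ) => p.1 :=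
      LipschitzWith.prod_fst.locallyLipschitz
    have hinit : LocallyLipschitz fun p : NNParams (L + 1) N × (Fin (N 0) → ℝ) =>
        ((fun ℓ : Fin L => p.1 ⟨ℓ.val, Nat.lt_succ_of_lt ℓ.isLt⟩), p.2) :=
      (LocallyLipschitz.pi fun _ => hΦ.apply _).prodMk LipschitzWith.prod_snd.locallyLipschitz
    exact (hΦ.apply ⟨L, Nat.lt_succ_self L⟩).nnAffine
      ((locallyLipschitz_nnHidden hρ L N).comp hinit :)

end

theorem finrank_nnLayer (N : ℕ → ℕ) (ℓ : ℕ) :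
    finrank ℝ (NNLayer N ℓ) = (N ℓ + 1) * N (ℓ + 1) := by
  simp only [Module.finrank_prod, Module.finrank_pi_fintype, Module.finrank_self,
    Finset.sum_const, Finset.card_univ, Fintype.card_fin, smul_eq_mul]
  ring

theorem finrank_nnParams (L : ℕ) (N : ℕ → ℕ) :
    finrank ℝ (NNParams L N) = ∑ ℓ ∈ Finset.range L, (N ℓ + 1) * N (ℓ + 1) := by
  rw [Module.finrank_pi_fintype, ← Fin.sum_univ_eq_sum_range (fun ℓ => (N ℓ + 1) * N (ℓ + 1))]
  exact Finset.sum_congr rfl fun ℓ _ => finrank_nnLayer N ℓ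

theorem stmt12_general (L M : ℕ) (N : ℕ → ℕ)
    (ρ : ℝ → ℝ) (hρ : LocallyLipschitz ρ)
    (Ω : Set (Fin (N 0) → ℝ)) (hΩ : IsCompact Ω)
    (hM : (∑ ℓ ∈ Finset.range L, (N ℓ + 1) * N (ℓ + 1)) < M) :
    haveI : CompactSpace Ω := isCompact_iff_compactSpace.mp hΩ
    ∀ Λ : C(Ω, Fin (N L) → ℝ) → (Fin M → ℝ), LocallyLipschitz Λ →
      MeasureTheory.volume
        (Λ '' {f : C(Ω, Fin (N L) → ℝ) |
            ∃ Φ : NNParams L N, ∀ x : Ω, f x = nnRealization ρ L N Φ x.val}) = 0 := by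
  have : CompactSpace Ω := isCompact_iff_compactSpace.mp hΩ
  intro Λ hΛ
  have hrestrict : LocallyLipschitz fun p : NNParams L N × Ω => (p.1, p.2.val) :=
    LipschitzWith.prod_fst.locallyLipschitz.prodMk
      ((LipschitzWith.subtype_val Ω).comp LipschitzWith.prod_snd).locallyLipschitz
  have hF := (locallyLipschitz_nnRealization hρ L N).comp hrestrict
  let F : C(NNParams L N × Ω, Fin (N L) → ℝ) := ⟨_, hF.continuous⟩
  have hrealizations : {f : C(Ω, Fin (N L) → ℝ) |
      ∃ Φ : NNParams L N, ∀ x : Ω, f x = nnRealization ρ L N Φ x.val} = range F.curry := by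
    ext f
    exact ⟨fun ⟨Φ, hΦ⟩ => ⟨Φ, ContinuousMap.ext fun x => (hΦ x).symm⟩,
      fun ⟨Φ, hΦ⟩ => ⟨Φ, fun x => hΦ ▸ rfl⟩⟩
  rw [hrealizations, ← range_comp]
  exact (hΛ.comp (LocallyLipschitz.curry hF)).volume_range_eq_zero
    (by rwa [finrank_nnParams, Fintype.card_fin])

/-- If `Λ : C(Ω; ℝ^{N L}) → ℝ^M` is locally Lipschitz (w.r.t. the sup norm)
and `M` exceeds the number of network parameters, then the image under `Λ` of the set of
realizations is a Lebesgue null set. -/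
theorem stmt12 (L M : ℕ) (hL : 1 ≤ L) (N : ℕ → ℕ) (hN : ∀ ℓ ≤ L, 0 < N ℓ)
    (ρ : ℝ → ℝ) (hρ : LocallyLipschitz ρ)
    (Ω : Set (Fin (N 0) → ℝ)) (hΩ : IsCompact Ω)
    (hM : (∑ ℓ ∈ Finset.range L, (N ℓ + 1) * N (ℓ + 1)) < M) :
    haveI : CompactSpace Ω := isCompact_iff_compactSpace.mp hΩ
    ∀ Λ : C(Ω, Fin (N L) → ℝ) → (Fin M → ℝ), LocallyLipschitz Λ →
      MeasureTheory.volume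
        (Λ '' {f : C(Ω, Fin (N L) → ℝ) |
            ∃ Φ : NNParams L N, ∀ x : Ω, f x = nnRealization ρ L N Φ x.val}) = 0 :=
  stmt12_general L M N ρ hρ Ω hΩ hM
end
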